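/- The fundamental group of the circle based at the point 1 is isomorphic to the additive group of integers; that is, there is a group isomorphism between the fundamental group of the unit circle in the complex numbers at the basepoint 1 and the integers (viewed as a multiplicative group). -/

import Mathlib

/-!
`Circle.exp : ℝ → Circle` is a covering map whose fibres are the orbits of `2πℤ` acting on `ℝ`
by translation. Since `ℝ` is simply connected, monodromy identifies `π₁(Circle, 1)` with the
opposite of this deck group, which is abelian and infinite cyclic.
-/

open Real

noncomputable def IsAddQuotientCoveringMap.fundamentalGroupEquivMultiplicative
    {E X G : Type*} [TopologicalSpace E] [TopologicalSpace X] [SimplyConnectedSpace E]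
    [AddCommGroup G] [AddAction G E] {p : E → X} (hp : IsAddQuotientCoveringMap p G) {x : X}
    (e : p ⁻¹' {x}) : FundamentalGroup X x ≃* Multiplicative G :=
  (hp.fundamentalGroupEquiv e).trans MulOpposite.opMulEquiv.symm

noncomputable def AddSubgroup.zmultiplesEquivInt {A : Type*} [AddCommGroup A]
    [IsAddTorsionFree A] {a : A} (ha : a ≠ 0) : zmultiples a ≃+ ℤ :=
  ((AddMonoidHom.ofInjective (f := zmultiplesHom A a) (smul_left_injective ℤ ha)).trans
    (AddEquiv.addSubgroupCongr (range_zmultiplesHom a))).symm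

/-- The fundamental group of the circle based at `1` is isomorphic to
the additive group of integers (viewed as a multiplicative group). -/
theorem fundamentalGroup_circle_iso_int :
    Nonempty (FundamentalGroup Circle (1 : Circle) ≃* Multiplicative ℤ) :=
  ⟨(Circle.isAddQuotientCoveringMap_exp.fundamentalGroupEquivMultiplicative
      ⟨0, Circle.exp_zero⟩).trans
    (AddSubgroup.zmultiplesEquivInt two_pi_pos.ne').toMultiplicative⟩
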